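/- Let n ≥ 3, m ∈ ℕ with 2m < n, and let u : ℝⁿ₊ → [0,∞) be locally bounded with u(x) = ∫_{ℝⁿ₊} G⁺_{2m}(x,y) u_m(y) dy for some u_m ≥ 0, where G⁺_{2m}(x,y) = |x-y|^{-(n-2m)} - |x*-y|^{-(n-2m)}. Define the Kelvin transform ū(x) = |x|^{-(n-2m)} u(x/|x|²) for x ≠ 0. Then ū(x) = ∫_{ℝⁿ₊} G⁺_{2m}(x,z) ū_m(z) |z|^{-(2m+α)} dz, where ū_m(z) = |z|^{-(n-α)} u_m(z/|z|²) and 0 < α < 2. -/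

import Mathlib

/-!
Substitute `y = z/|z|²` in the representation of `u` at `x/|x|²`: the inversion maps `ℝⁿ₊` onto
itself with Jacobian `|z|^{-2n}`. Since `|x/|x|² - z/|z|²| = |x - z|/(|x||z|)` and the reflection
`x ↦ x*` commutes with the inversion, `G⁺₂ₘ(x/|x|², z/|z|²) = |x|^{n-2m}|z|^{n-2m} G⁺₂ₘ(x, z)`;
the factor `|x|^{n-2m}` cancels the Kelvin weight of `ū`, and `|z|^{n-2m}|z|^{-2n}` splits as
`|z|^{-(n-α)}|z|^{-(2m+α)}`.
-/

open MeasureTheory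

noncomputable section

/-- The last coordinate of a point in `ℝⁿ`. -/
def lastCoord (n : ℕ) (x : EuclideanSpace ℝ (Fin n)) : ℝ :=
  if h : 0 < n then x ⟨n - 1, by omega⟩ else 0

/-- The upper half space `ℝⁿ₊ = {x : xₙ > 0}`. -/
def upperHalf (n : ℕ) : Set (EuclideanSpace ℝ (Fin n)) := {x | 0 < lastCoord n x}

/-- Reflection `x*` of `x` across `∂ℝⁿ₊` (the last coordinate is negated). -/
def reflLast (n : ℕ) (x : EuclideanSpace ℝ (Fin n)) : EuclideanSpace ℝ (Fin n) :=
  WithLp.toLp 2 (fun i => if (i : ℕ) = n - 1 then -x i else x i)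

/-- The Green's function `G⁺₂ₘ` of `(-Δ)^m` on the half space. -/
def G2m (n m : ℕ) (x y : EuclideanSpace ℝ (Fin n)) : ℝ :=
  ‖x - y‖ ^ (-((n : ℝ) - 2 * m)) - ‖reflLast n x - y‖ ^ (-((n : ℝ) - 2 * m))

open EuclideanGeometry

section Inversion

variable {E : Type*} [NormedAddCommGroup E] [InnerProductSpace ℝ E]

theorem inversion_zero_one_apply (x : E) : inversion (0 : E) 1 x = (‖x‖ ^ 2)⁻¹ • x := by
  simp [inversion, inv_pow]

theorem norm_inversion_sub_rpow_neg {a b : E} (ha : a ≠ 0) (hb : b ≠ 0) (p : ℝ) :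
    ‖(‖a‖ ^ 2)⁻¹ • a - (‖b‖ ^ 2)⁻¹ • b‖ ^ (-p) = (‖a‖ * ‖b‖) ^ p * ‖a - b‖ ^ (-p) := by
  have hab : 0 < ‖a‖ * ‖b‖ := by positivity
  have hdist := dist_inversion_inversion (c := (0 : E)) ha hb 1
  simp only [inversion_zero_one_apply, dist_eq_norm, sub_zero, one_pow] at hdist
  rw [hdist, one_div_mul_eq_div, Real.div_rpow (norm_nonneg _) hab.le, Real.rpow_neg hab.le,
    div_inv_eq_mul, mul_comm]

theorem abs_det_smul_reflection [FiniteDimensional ℝ E] (a : ℝ) (K : Submodule ℝ E)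
    [K.HasOrthogonalProjection] :
    |(a ^ 2 • (K.reflection : E →L[ℝ] E)).det| = a ^ (2 * Module.finrank ℝ E) := by
  have hrefl : (K.reflection : E →L[ℝ] E).det = (-1) ^ Module.finrank ℝ Kᗮ :=
    K.det_reflection
  rw [ContinuousLinearMap.det, ContinuousLinearMap.toLinearMap_smul, LinearMap.det_smul,
    ← ContinuousLinearMap.det, hrefl]
  simp [abs_mul, pow_mul]

variable [FiniteDimensional ℝ E] [MeasurableSpace E] [BorelSpace E] (μ : Measure E)
  [μ.IsAddHaarMeasure] {F : Type*} [NormedAddCommGroup F] [NormedSpace ℝ F]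

theorem integral_image_inversion {s : Set E} (hs : MeasurableSet s) {c : E} (hc : c ∉ s)
    {R : ℝ} (hR : R ≠ 0) (g : E → F) :
    ∫ y in inversion c R '' s, g y ∂μ =
      ∫ x in s, (R / dist x c) ^ (2 * Module.finrank ℝ E) • g (inversion c R x) ∂μ := by
  rw [integral_image_eq_integral_abs_det_fderiv_smul μ hs
    (fun x hx ↦ (hasFDerivAt_inversion (ne_of_mem_of_not_mem hx hc)).hasFDerivWithinAt)
    (inversion_injective c hR).injOn]
  simp only [abs_det_smul_reflection]

end Inversion

section UpperHalf

variable {n : ℕ}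

theorem lastCoord_smul (c : ℝ) (x : EuclideanSpace ℝ (Fin n)) :
    lastCoord n (c • x) = c * lastCoord n x := by
  unfold lastCoord
  split <;> simp

theorem measurableSet_upperHalf : MeasurableSet (upperHalf n) := by
  refine measurableSet_lt measurable_const ?_
  unfold lastCoord
  split
  · exact (measurable_pi_apply _).comp (WithLp.measurable_ofLp 2 _)
  · exact measurable_const

theorem zero_notMem_upperHalf : (0 : EuclideanSpace ℝ (Fin n)) ∉ upperHalf n := by
  simp [upperHalf, lastCoord]

theorem mapsTo_inversion_upperHalf :
    Set.MapsTo (inversion (0 : EuclideanSpace ℝ (Fin n)) 1) (upperHalf n) (upperHalf n) := by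
  intro x (hx : 0 < lastCoord n x)
  have hx0 : x ≠ 0 := ne_of_mem_of_not_mem hx zero_notMem_upperHalf
  show 0 < lastCoord n _
  rw [inversion_zero_one_apply, lastCoord_smul]
  positivity

theorem image_inversion_upperHalf :
    inversion (0 : EuclideanSpace ℝ (Fin n)) 1 '' upperHalf n = upperHalf n :=
  mapsTo_inversion_upperHalf.image_subset.antisymm fun x hx ↦
    ⟨inversion 0 1 x, mapsTo_inversion_upperHalf hx, inversion_inversion _ one_ne_zero _⟩

end UpperHalf

section Reflection

variable {n : ℕ}

theorem norm_reflLast (x : EuclideanSpace ℝ (Fin n)) : ‖reflLast n x‖ = ‖x‖ := by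
  simp only [EuclideanSpace.norm_eq, reflLast]
  congr 1
  refine Finset.sum_congr rfl fun i _ ↦ ?_
  split_ifs <;> simp

theorem reflLast_smul (c : ℝ) (x : EuclideanSpace ℝ (Fin n)) :
    reflLast n (c • x) = c • reflLast n x := by
  ext i
  simp only [reflLast, PiLp.smul_apply, smul_eq_mul]
  split_ifs <;> simp

theorem reflLast_ne_zero {x : EuclideanSpace ℝ (Fin n)} (hx : x ≠ 0) : reflLast n x ≠ 0 := by
  rw [← norm_ne_zero_iff, norm_reflLast]
  exact norm_ne_zero_iff.2 hx

theorem G2m_inversion (m : ℕ) {x z : EuclideanSpace ℝ (Fin n)} (hx : x ≠ 0) (hz : z ≠ 0) :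
    G2m n m ((‖x‖ ^ 2)⁻¹ • x) ((‖z‖ ^ 2)⁻¹ • z) =
      (‖x‖ * ‖z‖) ^ ((n : ℝ) - 2 * m) * G2m n m x z := by
  have hnorm : (‖x‖ ^ 2)⁻¹ • reflLast n x = (‖reflLast n x‖ ^ 2)⁻¹ • reflLast n x := by
    rw [norm_reflLast]
  rw [G2m, G2m, reflLast_smul, hnorm, norm_inversion_sub_rpow_neg hx hz,
    norm_inversion_sub_rpow_neg (reflLast_ne_zero hx) hz, norm_reflLast]
  ring

end Reflection

theorem rpow_sub_mul_one_div_pow_eq_rpow_mul_rpow {t : ℝ} (ht : 0 < t) (n : ℕ) (a b : ℝ) :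
    t ^ ((n : ℝ) - b) * (1 / t) ^ (2 * n) = t ^ (-((n : ℝ) - a)) * t ^ (-(b + a)) := by
  rw [one_div, inv_pow, ← Real.rpow_natCast, ← Real.rpow_neg ht.le, ← Real.rpow_add ht,
    ← Real.rpow_add ht]
  push_cast
  ring_nf

theorem kelvin_integral_identity_general (n m : ℕ) (α : ℝ)
    (u um : EuclideanSpace ℝ (Fin n) → ℝ)
    (hrep : ∀ x ∈ upperHalf n, u x = ∫ y in upperHalf n, G2m n m x y * um y) :
    ∀ x ∈ upperHalf n, x ≠ 0 →
      ‖x‖ ^ (-((n : ℝ) - 2 * m)) * u ((‖x‖ ^ 2)⁻¹ • x) =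
        ∫ z in upperHalf n,
          G2m n m x z * (‖z‖ ^ (-((n : ℝ) - α)) * um ((‖z‖ ^ 2)⁻¹ • z)) *
            ‖z‖ ^ (-(2 * (m : ℝ) + α)) := by
  intro x hx hx0
  have hx' : (‖x‖ ^ 2)⁻¹ • x ∈ upperHalf n :=
    inversion_zero_one_apply x ▸ mapsTo_inversion_upperHalf hx
  have hcov := integral_image_inversion volume measurableSet_upperHalf zero_notMem_upperHalf
    one_ne_zero fun y ↦ G2m n m ((‖x‖ ^ 2)⁻¹ • x) y * um y
  rw [image_inversion_upperHalf, finrank_euclideanSpace_fin] at hcov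
  rw [hrep _ hx', hcov, ← integral_const_mul]
  refine setIntegral_congr_fun measurableSet_upperHalf fun z hz ↦ ?_
  have hz0 : z ≠ 0 := ne_of_mem_of_not_mem hz zero_notMem_upperHalf
  have hxpos : 0 < ‖x‖ := norm_pos_iff.2 hx0
  have hcancel : ‖x‖ ^ (-((n : ℝ) - 2 * m)) * ‖x‖ ^ ((n : ℝ) - 2 * m) = 1 := by
    rw [Real.rpow_neg hxpos.le, inv_mul_cancel₀ (by positivity)]
  simp only [inversion_zero_one_apply, dist_zero_right, smul_eq_mul, G2m_inversion m hx0 hz0,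
    Real.mul_rpow hxpos.le (norm_nonneg z)]
  have hweight := rpow_sub_mul_one_div_pow_eq_rpow_mul_rpow (norm_pos_iff.2 hz0) n α (2 * m)
  linear_combination (‖z‖ ^ ((n : ℝ) - 2 * m) * (1 / ‖z‖) ^ (2 * n) * G2m n m x z *
    um ((‖z‖ ^ 2)⁻¹ • z)) * hcancel + G2m n m x z * um ((‖z‖ ^ 2)⁻¹ • z) * hweight

/-- Kelvin transform of the half-space integral representation: if
`u(x) = ∫_{ℝⁿ₊} G⁺₂ₘ(x,y) uₘ(y) dy`, then
`ū(x) = ∫_{ℝⁿ₊} G⁺₂ₘ(x,z) ūₘ(z) |z|^{-(2m+α)} dz`. -/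
theorem kelvin_integral_identity (n m : ℕ) (hn : 3 ≤ n) (hm : 0 < m) (hmn : 2 * m < n)
    (α : ℝ) (hα : 0 < α) (hα2 : α < 2)
    (u um : EuclideanSpace ℝ (Fin n) → ℝ)
    (hu0 : ∀ y, 0 ≤ u y) (hum0 : ∀ y, 0 ≤ um y)
    (hloc : ∀ K : Set (EuclideanSpace ℝ (Fin n)), IsCompact K → ∃ C, ∀ x ∈ K, |u x| ≤ C)
    (hrep : ∀ x ∈ upperHalf n, u x = ∫ y in upperHalf n, G2m n m x y * um y) :
    ∀ x ∈ upperHalf n, x ≠ 0 →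
      ‖x‖ ^ (-((n : ℝ) - 2 * m)) * u ((‖x‖ ^ 2)⁻¹ • x) =
        ∫ z in upperHalf n,
          G2m n m x z * (‖z‖ ^ (-((n : ℝ) - α)) * um ((‖z‖ ^ 2)⁻¹ • z)) *
            ‖z‖ ^ (-(2 * (m : ℝ) + α)) :=
  kelvin_integral_identity_general n m α u um hrep
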